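/- Let σ be continuous and positive, S continuous, G(S) < ∞, f_S the invariant density, F continuous with ∫_ℝ |F| f_S < ∞, ϑ = ∫_ℝ F f_S, M(y) = ∫_{-∞}^y (F(v) − ϑ) f_S(v) dv. Suppose M/(σ² f_S) is not identically zero and J := ∫_ℝ M(y)²/(σ(y)² f_S(y)) dy < ∞. Then the infimum of ∫_ℝ ψ(y)² σ(y)² f_S(y) dy over all continuous compactly supported ψ satisfying ∫_ℝ (F(x) − ϑ)(∫_0^x ψ(v) dv) f_S(x) dx = 1/2 equals I_* = (4J)^{-1}. -/

import Mathlib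

/-!
With `h = (F - ϑ) f_S`, `w = σ² f_S` and `M y = ∫_{-∞}^y h`, we have `M' = h` and, since `∫ h = 0`,
`M → 0` at both ends. Integrating by parts turns the constraint into `∫ M ψ = -1/2`, so the weighted
Cauchy–Schwarz inequality gives `1/4 ≤ J · ∫ ψ² w`. Equality would need `ψ ∝ M / w`, which is not
compactly supported; multiplying it by cutoffs `χₙ ↑ 1` and normalising gives admissible `ψₙ` with
energy `(∫ χₙ² M²/w) / (2 ∫ χₙ M²/w)²`, which tends to `(4J)⁻¹` by dominated convergence.
-/

open MeasureTheory Real Set Filter intervalIntegral Topology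

section CauchySchwarz

variable {α : Type*} [MeasurableSpace α] {μ : Measure α} {f g w : α → ℝ}

theorem sq_integral_mul_le_integral_sq_mul_integral_sq (hf : Integrable (fun x => f x ^ 2) μ)
    (hg : Integrable (fun x => g x ^ 2) μ) (hfg : Integrable (fun x => f x * g x) μ) :
    (∫ x, f x * g x ∂μ) ^ 2 ≤ (∫ x, f x ^ 2 ∂μ) * ∫ x, g x ^ 2 ∂μ := by
  have hquad : ∀ t : ℝ, 0 ≤ (∫ x, g x ^ 2 ∂μ) * (t * t) + 2 * (∫ x, f x * g x ∂μ) * t +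
      ∫ x, f x ^ 2 ∂μ := fun t =>
    calc 0 ≤ ∫ x, (t * g x + f x) ^ 2 ∂μ := integral_nonneg fun x => sq_nonneg _
      _ = ∫ x, (t ^ 2 * g x ^ 2 + 2 * t * (f x * g x)) + f x ^ 2 ∂μ := by
        congr 1; ext x; ring
      _ = _ := by
        have hsum : Integrable (fun x => t ^ 2 * g x ^ 2 + 2 * t * (f x * g x)) μ :=
          (hg.const_mul _).add (hfg.const_mul _)
        rw [integral_add hsum hf,
          integral_add (hg.const_mul _) (hfg.const_mul _), MeasureTheory.integral_const_mul,
          MeasureTheory.integral_const_mul]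
        ring
  have := discrim_le_zero hquad
  rw [discrim] at this
  nlinarith

theorem sq_integral_mul_le_integral_div_mul_integral_mul (hw : ∀ x, 0 < w x)
    (hf : Integrable (fun x => f x ^ 2 / w x) μ) (hg : Integrable (fun x => g x ^ 2 * w x) μ)
    (hfg : Integrable (fun x => f x * g x) μ) :
    (∫ x, f x * g x ∂μ) ^ 2 ≤ (∫ x, f x ^ 2 / w x ∂μ) * ∫ x, g x ^ 2 * w x ∂μ := by
  have hsq : ∀ x, √(w x) ^ 2 = w x := fun x => sq_sqrt (hw x).le
  have e₁ : (fun x => (f x / √(w x)) ^ 2) = fun x => f x ^ 2 / w x := by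
    ext x; rw [div_pow, hsq]
  have e₂ : (fun x => (g x * √(w x)) ^ 2) = fun x => g x ^ 2 * w x := by
    ext x; rw [mul_pow, hsq]
  have e₁₂ : (fun x => f x / √(w x) * (g x * √(w x))) = fun x => f x * g x := by
    ext x; field_simp [(sqrt_pos.2 (hw x)).ne']
  have := sq_integral_mul_le_integral_sq_mul_integral_sq (μ := μ)
    (e₁ ▸ hf) (e₂ ▸ hg) (e₁₂ ▸ hfg)
  rwa [e₁, e₂, e₁₂] at this

end CauchySchwarz

section Primitive

variable {h ψ : ℝ → ℝ}

theorem norm_intervalIntegral_le_integral_norm (hψ : Integrable ψ) (a b : ℝ) :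
    ‖∫ v in a..b, ψ v‖ ≤ ∫ v, ‖ψ v‖ :=
  norm_integral_le_integral_norm_uIoc.trans
    (setIntegral_le_integral hψ.norm (ae_of_all _ fun _ => norm_nonneg _))

theorem norm_integral_Iic_le_integral_norm (hh : Integrable h) (y : ℝ) :
    ‖∫ v in Iic y, h v‖ ≤ ∫ v, ‖h v‖ :=
  (MeasureTheory.norm_integral_le_integral_norm _).trans
    (setIntegral_le_integral hh.norm (ae_of_all _ fun _ => norm_nonneg _))

theorem hasDerivAt_integral_Iic (hc : Continuous h) (hi : Integrable h) (y : ℝ) :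
    HasDerivAt (fun y => ∫ v in Iic y, h v) (h y) y := by
  have : (fun y => ∫ v in Iic y, h v) = fun y => (∫ v in Iic 0, h v) + ∫ v in (0:ℝ)..y, h v := by
    ext y
    rw [← integral_Iic_sub_Iic hi.integrableOn hi.integrableOn]
    ring
  rw [this]
  exact (hc.integral_hasStrictDerivAt 0 y).hasDerivAt.const_add _

theorem continuous_integral_Iic (hc : Continuous h) (hi : Integrable h) :
    Continuous fun y => ∫ v in Iic y, h v :=
  continuous_iff_continuousAt.2 fun y => (hasDerivAt_integral_Iic hc hi y).continuousAt

theorem integral_Iic_eq_neg_integral_Ioi (hi : Integrable h) (h₀ : ∫ v, h v = 0) (y : ℝ) :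
    ∫ v in Iic y, h v = -∫ v in Ioi y, h v := by
  linarith [integral_Iic_add_Ioi (f := h) (b := y) hi.integrableOn hi.integrableOn]

theorem tendsto_integral_Iic_atTop_zero (hi : Integrable h) (h₀ : ∫ v, h v = 0) :
    Tendsto (fun y => ∫ v in Iic y, h v) atTop (𝓝 0) := by
  simpa only [neg_zero, ← integral_Iic_eq_neg_integral_Ioi hi h₀] using
    (tendsto_integral_Ioi_zero (f := h) (μ := volume) (b := fun y => y) tendsto_id).neg

theorem integral_mul_intervalIntegral_eq_neg_integral_Iic_mul (hhc : Continuous h)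
    (hhi : Integrable h) (h₀ : ∫ x, h x = 0) (hψc : Continuous ψ) (hψi : Integrable ψ) :
    ∫ x, h x * (∫ v in (0:ℝ)..x, ψ v) = -∫ x, (∫ v in Iic x, h v) * ψ x := by
  set Ψ := fun x => ∫ v in (0:ℝ)..x, ψ v
  set M := fun x => ∫ v in Iic x, h v
  have hΨd : ∀ x, HasDerivAt Ψ (ψ x) x := fun x => (hψc.integral_hasStrictDerivAt 0 x).hasDerivAt
  have hΨc : Continuous Ψ := continuous_iff_continuousAt.2 fun x => (hΨd x).continuousAt
  have hMc : Continuous M := continuous_integral_Iic hhc hhi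
  have hΨb : ∀ x, ‖Ψ x‖ ≤ ∫ v, ‖ψ v‖ := norm_intervalIntegral_le_integral_norm hψi 0
  have hΨbdd (l : Filter ℝ) : IsBoundedUnder (· ≤ ·) l (norm ∘ Ψ) := isBoundedUnder_of ⟨_, hΨb⟩
  have hibp := integral_mul_deriv_eq_deriv_mul (fun x _ => hΨd x)
    (fun x _ => hasDerivAt_integral_Iic hhc hhi x)
    (hhi.bdd_mul hΨc.aestronglyMeasurable (ae_of_all _ hΨb))
    (hψi.mul_bdd hMc.aestronglyMeasurable (ae_of_all _ (norm_integral_Iic_le_integral_norm hhi)))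
    (isBoundedUnder_le_mul_tendsto_zero (hΨbdd _) (tendsto_integral_Iic_zero tendsto_id))
    (isBoundedUnder_le_mul_tendsto_zero (hΨbdd _) (tendsto_integral_Iic_atTop_zero hhi h₀))
  rw [sub_zero, zero_sub] at hibp
  calc ∫ x, h x * Ψ x = ∫ x, Ψ x * h x := by simp only [mul_comm]
    _ = -∫ x, ψ x * M x := hibp
    _ = -∫ x, M x * ψ x := by simp only [mul_comm]

end Primitive

section Cutoff

def cutoff (n : ℕ) (y : ℝ) : ℝ := max 0 (min 1 ((n : ℝ) + 1 - |y|))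

theorem continuous_cutoff (n : ℕ) : Continuous (cutoff n) := by
  unfold cutoff; fun_prop

theorem cutoff_nonneg (n : ℕ) (y : ℝ) : 0 ≤ cutoff n y := le_max_left _ _

theorem cutoff_le_one (n : ℕ) (y : ℝ) : cutoff n y ≤ 1 :=
  max_le zero_le_one (min_le_left _ _)

theorem cutoff_eq_one_of_abs_le {n : ℕ} {y : ℝ} (hy : |y| ≤ n) : cutoff n y = 1 := by
  rw [cutoff, min_eq_left (by linarith), max_eq_right zero_le_one]

theorem cutoff_eq_zero_of_le_abs {n : ℕ} {y : ℝ} (hy : (n : ℝ) + 1 ≤ |y|) : cutoff n y = 0 := by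
  rw [cutoff, max_eq_left ((min_le_right _ _).trans (by linarith))]

theorem hasCompactSupport_cutoff (n : ℕ) : HasCompactSupport (cutoff n) := by
  refine HasCompactSupport.intro (isCompact_Icc (a := -((n : ℝ) + 1)) (b := (n : ℝ) + 1))
    fun y hy => cutoff_eq_zero_of_le_abs ?_
  rw [mem_Icc, ← abs_le] at hy
  exact (not_le.1 hy).le

theorem tendsto_cutoff_atTop (y : ℝ) : Tendsto (fun n => cutoff n y) atTop (𝓝 1) :=
  tendsto_const_nhds.congr' <| (eventually_ge_atTop ⌈|y|⌉₊).mono fun n hn =>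
    (cutoff_eq_one_of_abs_le ((Nat.le_ceil _).trans (by exact_mod_cast hn))).symm

theorem tendsto_integral_mul_cutoff_pow {q : ℝ → ℝ} (hq : Integrable q) (k : ℕ) :
    Tendsto (fun n => ∫ y, q y * cutoff n y ^ k) atTop (𝓝 (∫ y, q y)) := by
  refine tendsto_integral_of_dominated_convergence (fun y => ‖q y‖)
    (fun n => hq.aestronglyMeasurable.mul ((continuous_cutoff n).pow k).aestronglyMeasurable)
    hq.norm (fun n => ae_of_all _ fun y => ?_) (ae_of_all _ fun y => ?_)
  · rw [norm_mul, norm_pow, Real.norm_of_nonneg (cutoff_nonneg n y)]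
    exact mul_le_of_le_one_right (norm_nonneg _)
      (pow_le_one₀ (cutoff_nonneg n y) (cutoff_le_one n y))
  · simpa using ((tendsto_cutoff_atTop y).pow k).const_mul (q y)

end Cutoff

section Density

structure IsContinuousDensity (f : ℝ → ℝ) : Prop where
  continuous : Continuous f
  pos : ∀ x, 0 < f x
  integrable : Integrable f
  integral_eq_one : ∫ x, f x = 1

theorem IsContinuousDensity.of_eq_inv_integral_mul {f g : ℝ → ℝ} (hgc : Continuous g)
    (hgpos : ∀ x, 0 < g x) (hgi : Integrable g) (hf : ∀ x, f x = (∫ y, g y)⁻¹ * g x) :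
    IsContinuousDensity f := by
  have hG : 0 < ∫ y, g y :=
    integral_pos_of_integrable_nonneg_nonzero hgc hgi (fun y => (hgpos y).le) (hgpos 0).ne'
  obtain rfl : f = fun x => (∫ y, g y)⁻¹ * g x := funext hf
  exact ⟨continuous_const.mul hgc, fun x => mul_pos (inv_pos.2 hG) (hgpos x),
    hgi.const_mul _, by rw [MeasureTheory.integral_const_mul, inv_mul_cancel₀ hG.ne']⟩

theorem IsContinuousDensity.integrable_mul {f F : ℝ → ℝ} (hf : IsContinuousDensity f)
    (hF : Continuous F) (hFf : Integrable (fun x => |F x| * f x)) :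
    Integrable (fun x => F x * f x) :=
  (integrable_norm_iff (hF.mul hf.continuous).aestronglyMeasurable).1 <| hFf.congr <|
    ae_of_all _ fun x => by
      simp only [Pi.mul_apply, Real.norm_eq_abs, abs_mul, abs_of_pos (hf.pos x)]

theorem IsContinuousDensity.integrable_sub_mul {f F : ℝ → ℝ} (hf : IsContinuousDensity f)
    (hFf : Integrable (fun x => F x * f x)) (c : ℝ) : Integrable (fun x => (F x - c) * f x) := by
  simp_rw [sub_mul]
  exact hFf.sub (hf.integrable.const_mul c)

theorem IsContinuousDensity.integral_sub_mul_eq_zero {f F : ℝ → ℝ} (hf : IsContinuousDensity f)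
    (hFf : Integrable (fun x => F x * f x)) {c : ℝ} (hc : c = ∫ x, F x * f x) :
    ∫ x, (F x - c) * f x = 0 := by
  simp_rw [sub_mul]
  rw [integral_sub hFf (hf.integrable.const_mul c), MeasureTheory.integral_const_mul,
    hf.integral_eq_one, hc, mul_one, sub_self]

noncomputable def speedDensity (σ S : ℝ → ℝ) (y : ℝ) : ℝ :=
  ((σ y) ^ 2)⁻¹ * exp (2 * ∫ v in (0:ℝ)..y, S v / (σ v) ^ 2)

variable {σ S : ℝ → ℝ}

theorem speedDensity_pos (hσ : ∀ x, σ x ≠ 0) (y : ℝ) : 0 < speedDensity σ S y := by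
  have := hσ y
  unfold speedDensity
  positivity

theorem continuous_speedDensity (hσc : Continuous σ) (hσ : ∀ x, σ x ≠ 0) (hSc : Continuous S) :
    Continuous (speedDensity σ S) := by
  have hσ2 : ∀ x, σ x ^ 2 ≠ 0 := fun x => pow_ne_zero 2 (hσ x)
  have hdrift : Continuous fun v => S v / σ v ^ 2 := hSc.div (hσc.pow 2) hσ2
  exact ((hσc.pow 2).inv₀ hσ2).mul <| continuous_exp.comp <| continuous_const.mul <|
    continuous_primitive (fun _ _ => hdrift.intervalIntegrable _ _) 0

end Density

section Variational

def admissibleEnergies (h w : ℝ → ℝ) : Set ℝ :=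
  {r | ∃ ψ : ℝ → ℝ, Continuous ψ ∧ HasCompactSupport ψ ∧
    (∫ x, h x * ∫ v in (0:ℝ)..x, ψ v) = 1 / 2 ∧ r = ∫ y, ψ y ^ 2 * w y}

variable {h w M : ℝ → ℝ}

theorem inv_four_mul_le_of_mem_admissibleEnergies (hhc : Continuous h) (hhi : Integrable h)
    (h₀ : ∫ x, h x = 0) (hM : ∀ y, M y = ∫ v in Iic y, h v) (hwc : Continuous w)
    (hwpos : ∀ y, 0 < w y) (hJ : Integrable fun y => M y ^ 2 / w y)
    (hJpos : 0 < ∫ y, M y ^ 2 / w y) {r : ℝ} (hr : r ∈ admissibleEnergies h w) :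
    (4 * ∫ y, M y ^ 2 / w y)⁻¹ ≤ r := by
  obtain ⟨ψ, hψc, hψs, hcon, rfl⟩ := hr
  have hMψ : ∫ x, M x * ψ x = -(1 / 2) := by
    rw [← hcon, integral_mul_intervalIntegral_eq_neg_integral_Iic_mul hhc hhi h₀ hψc
      (hψc.integrable_of_hasCompactSupport hψs), neg_neg]
    simp only [hM]
  have hMc : Continuous M := funext hM ▸ continuous_integral_Iic hhc hhi
  have hCS := sq_integral_mul_le_integral_div_mul_integral_mul hwpos hJ
    (((hψc.pow 2).mul hwc).integrable_of_hasCompactSupport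
      (hψs.comp_left (zero_pow two_ne_zero)).mul_right)
    ((hMc.mul hψc).integrable_of_hasCompactSupport hψs.mul_left)
  rw [hMψ] at hCS
  rw [inv_eq_one_div, div_le_iff₀ (by positivity)]
  nlinarith

theorem mem_admissibleEnergies_of_cutoff (hhc : Continuous h) (hhi : Integrable h)
    (h₀ : ∫ x, h x = 0) (hM : ∀ y, M y = ∫ v in Iic y, h v) (hwc : Continuous w)
    (hwpos : ∀ y, 0 < w y) {n : ℕ} (hc : ∫ y, M y ^ 2 / w y * cutoff n y ≠ 0) :
    ((2 * ∫ y, M y ^ 2 / w y * cutoff n y)⁻¹) ^ 2 * ∫ y, M y ^ 2 / w y * cutoff n y ^ 2 ∈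
      admissibleEnergies h w := by
  set c := ∫ y, M y ^ 2 / w y * cutoff n y
  have hMc : Continuous M := funext hM ▸ continuous_integral_Iic hhc hhi
  have hψc : Continuous fun y => -(2 * c)⁻¹ * (M y / w y * cutoff n y) :=
    continuous_const.mul ((hMc.div hwc fun y => (hwpos y).ne').mul (continuous_cutoff n))
  have hψs : HasCompactSupport fun y => -(2 * c)⁻¹ * (M y / w y * cutoff n y) :=
    (hasCompactSupport_cutoff n).mul_left.mul_left
  refine ⟨_, hψc, hψs, ?_, ?_⟩
  · rw [integral_mul_intervalIntegral_eq_neg_integral_Iic_mul hhc hhi h₀ hψc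
      (hψc.integrable_of_hasCompactSupport hψs)]
    simp only [← hM]
    have e : ∀ x, M x * (-(2 * c)⁻¹ * (M x / w x * cutoff n x)) =
        -(2 * c)⁻¹ * (M x ^ 2 / w x * cutoff n x) := fun x => by ring
    simp only [e, MeasureTheory.integral_const_mul]
    change -(-(2 * c)⁻¹ * c) = 1 / 2
    field_simp
  · have e : ∀ y, (-(2 * c)⁻¹ * (M y / w y * cutoff n y)) ^ 2 * w y =
        ((2 * c)⁻¹) ^ 2 * (M y ^ 2 / w y * cutoff n y ^ 2) := fun y => by
      field_simp [(hwpos y).ne']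
    simp only [e, MeasureTheory.integral_const_mul]

theorem isGLB_admissibleEnergies (hhc : Continuous h) (hhi : Integrable h)
    (h₀ : ∫ x, h x = 0) (hM : ∀ y, M y = ∫ v in Iic y, h v) (hwc : Continuous w)
    (hwpos : ∀ y, 0 < w y) (hMne : ∃ y, M y ≠ 0) (hJ : Integrable fun y => M y ^ 2 / w y) :
    IsGLB (admissibleEnergies h w) (4 * ∫ y, M y ^ 2 / w y)⁻¹ := by
  set J := ∫ y, M y ^ 2 / w y
  have hJpos : 0 < J := by
    obtain ⟨y, hy⟩ := hMne
    have hMc : Continuous M := funext hM ▸ continuous_integral_Iic hhc hhi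
    exact integral_pos_of_integrable_nonneg_nonzero
      ((hMc.pow 2).div hwc fun y => (hwpos y).ne') hJ
      (fun y => div_nonneg (sq_nonneg _) (hwpos y).le)
      (div_ne_zero (pow_ne_zero 2 hy) (hwpos y).ne')
  refine ⟨fun r hr => inv_four_mul_le_of_mem_admissibleEnergies hhc hhi h₀ hM hwc hwpos hJ hJpos hr,
    fun b hb => ?_⟩
  have hc := tendsto_integral_mul_cutoff_pow hJ 1
  simp only [pow_one] at hc
  have hlim := (((hc.const_mul 2).inv₀ (by positivity)).pow 2).mul
    (tendsto_integral_mul_cutoff_pow hJ 2)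
  rw [show ((2 * J)⁻¹) ^ 2 * J = (4 * J)⁻¹ by field_simp; ring] at hlim
  refine ge_of_tendsto hlim ?_
  filter_upwards [hc.eventually_ne hJpos.ne'] with n hn
  exact hb (mem_admissibleEnergies_of_cutoff hhc hhi h₀ hM hwc hwpos hn)

end Variational

theorem moment_estimation_stmt6
    (σ S : ℝ → ℝ)
    (hσc : Continuous σ) (hσpos : ∀ x, 0 < σ x)
    (hSc : Continuous S)
    (hGfin : Integrable (fun y : ℝ =>
      ((σ y) ^ 2)⁻¹ * Real.exp (2 * ∫ v in (0:ℝ)..y, S v / (σ v) ^ 2)))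
    (fS : ℝ → ℝ)
    (hfS : ∀ x, fS x =
      (∫ y : ℝ, ((σ y) ^ 2)⁻¹ * Real.exp (2 * ∫ v in (0:ℝ)..y, S v / (σ v) ^ 2))⁻¹
        * ((σ x) ^ 2)⁻¹ * Real.exp (2 * ∫ v in (0:ℝ)..x, S v / (σ v) ^ 2))
    (F : ℝ → ℝ) (hFc : Continuous F)
    (hFint : Integrable (fun x => |F x| * fS x))
    (ϑ : ℝ) (hϑ : ϑ = ∫ x : ℝ, F x * fS x)
    (M : ℝ → ℝ) (hM : ∀ y, M y = ∫ v in Set.Iic y, (F v - ϑ) * fS v)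
    (hMnonzero : ¬ (∀ y : ℝ, M y / ((σ y) ^ 2 * fS y) = 0))
    (J : ℝ) (hJ : J = ∫ y : ℝ, (M y) ^ 2 / ((σ y) ^ 2 * fS y))
    (hJfin : Integrable (fun y : ℝ => (M y) ^ 2 / ((σ y) ^ 2 * fS y))) :
    IsGLB {r : ℝ | ∃ ψ : ℝ → ℝ, Continuous ψ ∧ HasCompactSupport ψ ∧
        (∫ x : ℝ, (F x - ϑ) * (∫ v in (0:ℝ)..x, ψ v) * fS x = 1 / 2) ∧
        r = ∫ y : ℝ, (ψ y) ^ 2 * (σ y) ^ 2 * fS y}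
      ((4 * J)⁻¹) := by
  have hσ : ∀ x, σ x ≠ 0 := fun x => (hσpos x).ne'
  have hf : IsContinuousDensity fS :=
    .of_eq_inv_integral_mul (continuous_speedDensity hσc hσ hSc) (speedDensity_pos hσ) hGfin
      fun x => (hfS x).trans (mul_assoc _ _ _)
  have hFf := hf.integrable_mul hFc hFint
  obtain ⟨y, hy⟩ := not_forall.1 hMnonzero
  have hGLB := isGLB_admissibleEnergies (h := fun x => (F x - ϑ) * fS x)
    (w := fun y => σ y ^ 2 * fS y) ((hFc.sub continuous_const).mul hf.continuous)
    (hf.integrable_sub_mul hFf ϑ) (hf.integral_sub_mul_eq_zero hFf hϑ) hM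
    ((hσc.pow 2).mul hf.continuous) (fun y => mul_pos (pow_pos (hσpos y) 2) (hf.pos y))
    ⟨y, (div_ne_zero_iff.1 hy).1⟩ hJfin
  have e₁ (ψ : ℝ → ℝ) : ∫ x, (F x - ϑ) * (∫ v in (0:ℝ)..x, ψ v) * fS x =
      ∫ x, (F x - ϑ) * fS x * ∫ v in (0:ℝ)..x, ψ v := by
    simp only [mul_right_comm _ (fS _)]
  have e₂ (ψ : ℝ → ℝ) : ∫ y, ψ y ^ 2 * σ y ^ 2 * fS y = ∫ y, ψ y ^ 2 * (σ y ^ 2 * fS y) := by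
    simp only [mul_assoc]
  simpa only [admissibleEnergies, e₁, e₂, ← hJ] using hGLB
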